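/- arXiv:1904.10507 — 3 statements merged into one kernel-verified Lean document; each statement's English description precedes it below -/
import Mathlib

section
/- Let d ≥ 1 and let f : ℝ_{>0}^d → ℝ be componentwise subadditive and Lebesgue measurable. Then f is bounded on every compact subset of ℝ_{>0}^d; equivalently, f is bounded on every product of compact intervals [a_1,b_1] × … × [a_d,b_d] with 0 < a_i < b_i for each i. -/
/-!
Writing each coordinate as `x i = t i + (x i - t i)` and applying subadditivity once per
coordinate gives `f x ≤ ∑ S, f (S.piecewise t (x - t))`, a sum of `2 ^ d` terms. Each map
`t ↦ S.piecewise t (x - t)` is a product of reflections and preserves volume. So if `f x` exceeded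
`2 ^ d * n` at a point `x` of the box `[A, B] ^ d`, the whole cube `(0, A) ^ d` would be covered by
`2 ^ d` preimages of `{f ≥ n} ∩ (0, B) ^ d`; by measurability the volume of that set tends to `0`
as `n → ∞`, a contradiction for large `n`. Splitting the constant point `2 * B` instead bounds
`f x` from below by `f (2 * B)` minus a sum of terms already bounded above. Finally, a compact
subset of the open orthant lies in such a box.
-/

open Filter MeasureTheory Topology Set Function Metric

theorem MeasureTheory.tendsto_measure_setOf_le_atTop {α : Type*} [MeasurableSpace α]
    {μ : Measure α} [IsFiniteMeasure μ] {f : α → ℝ} (hf : AEMeasurable f μ) :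
    Tendsto (fun n : ℕ => μ {x | n ≤ f x}) atTop (𝓝 0) := by
  have h_iInter : ⋂ n : ℕ, {x | (n : ℝ) ≤ f x} = ∅ := by
    ext x
    simpa using exists_nat_gt (f x)
  rw [← measure_empty (μ := μ), ← h_iInter]
  exact tendsto_measure_iInter_atTop (fun n => hf.nullMeasurable measurableSet_Ici)
    (fun m n hmn x (hx : (n : ℝ) ≤ f x) => (Nat.cast_le.2 hmn).trans hx) ⟨0, measure_ne_top _ _⟩

theorem measurePreserving_piecewise_sub {ι : Type*} [Fintype ι] [DecidableEq ι]
    (x : ι → ℝ) (S : Finset ι) :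
    MeasurePreserving (fun t : ι → ℝ => S.piecewise t (x - t)) := by
  have h (i : ι) : MeasurePreserving (fun s : ℝ => if i ∈ S then s else x i - s) := by
    split_ifs
    · exact .id volume
    · exact Measure.measurePreserving_sub_left volume (x i)
  convert volume_preserving_pi h using 1
  ext t i
  by_cases hi : i ∈ S <;> simp [hi]

theorem IsCompact.exists_forall_mem_Icc_of_subset_pos {ι : Type*} [Fintype ι]
    {K : Set (ι → ℝ)} (hK : IsCompact K) (hKpos : K ⊆ {x | ∀ i, 0 < x i}) :
    ∃ A B, 0 < A ∧ A ≤ B ∧ ∀ x ∈ K, ∀ i, x i ∈ Icc A B := by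
  classical
  have hO : IsOpen {x : ι → ℝ | ∀ i, 0 < x i} := by
    simpa only [ofPred_forall] using
      isOpen_iInter_of_finite fun i => isOpen_lt continuous_const (continuous_apply i)
  obtain ⟨δ, hδ, hthick⟩ := hK.exists_thickening_subset_open hO hKpos
  obtain ⟨C, hC⟩ := hK.isBounded.exists_norm_le
  refine ⟨δ, max δ C, hδ, le_max_left _ _, fun x hx i => ⟨?_, ?_⟩⟩
  · by_contra! hxi
    have hmem : update x i 0 ∈ thickening δ K := by
      refine mem_thickening_iff.2 ⟨x, hx, (dist_pi_lt_iff hδ).2 fun j => ?_⟩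
      rcases eq_or_ne j i with rfl | hj
      · simpa [abs_of_pos (hKpos hx j)] using hxi
      · simpa [hj] using hδ
    simpa using hthick hmem i
  · exact ((le_abs_self _).trans ((norm_le_pi_norm x i).trans (hC x hx))).trans (le_max_right _ _)

def ComponentwiseSubadditive {ι : Type*} [DecidableEq ι] (f : (ι → ℝ) → ℝ) : Prop :=
  ∀ (i : ι) (x : ι → ℝ) (y : ℝ), (∀ j, 0 < x j) → 0 < y →
    f (update x i (x i + y)) ≤ f x + f (update x i y)

namespace ComponentwiseSubadditive

variable {ι : Type*} [DecidableEq ι] {f : (ι → ℝ) → ℝ}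

theorem le_add_update (hf : ComponentwiseSubadditive f) {w : ι → ℝ} (hw : ∀ j, 0 < w j)
    {i : ι} {s : ℝ} (hs : 0 < s) (hsw : s < w i) :
    f w ≤ f (update w i s) + f (update w i (w i - s)) := by
  have hpos : ∀ j, 0 < update w i s j := fun j => by
    rcases eq_or_ne j i with rfl | hj <;> simp [*]
  simpa using hf i (update w i s) (w i - s) hpos (sub_pos.2 hsw)

theorem le_sum_powerset_piecewise [Fintype ι] (hf : ComponentwiseSubadditive f) {x t : ι → ℝ}
    (ht : ∀ i, 0 < t i) (htx : ∀ i, t i < x i) (A : Finset ι) :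
    f x ≤ ∑ S ∈ A.powerset, f (A.piecewise (S.piecewise t (x - t)) x) := by
  induction A using Finset.induction_on with
  | empty => simp
  | @insert j A hj ih =>
    rw [Finset.sum_powerset_insert hj, ← Finset.sum_add_distrib]
    refine ih.trans (Finset.sum_le_sum fun S hS => ?_)
    have hjS : j ∉ S := fun h => hj (Finset.mem_powerset.1 hS h)
    set w := A.piecewise (S.piecewise t (x - t)) x with hw_def
    have hw : ∀ i, 0 < w i := fun i =>
      A.piecewise_cases (S.piecewise t (x - t)) x (fun v : ℝ => 0 < v)
        (S.piecewise_cases t (x - t) (fun v : ℝ => 0 < v) (ht i) (sub_pos.2 (htx i)))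
        ((ht i).trans (htx i))
    have hwj : w j = x j := A.piecewise_eq_of_notMem _ _ hj
    have h_in : update w j (t j) = (insert j A).piecewise ((insert j S).piecewise t (x - t)) x := by
      ext i
      rcases eq_or_ne i j with rfl | hij
      · simp
      · simp [hij, hw_def, Finset.piecewise]
    have h_out : update w j (w j - t j) = (insert j A).piecewise (S.piecewise t (x - t)) x := by
      ext i
      rcases eq_or_ne i j with rfl | hij
      · simp [hwj, hjS]
      · simp [hij, hw_def, Finset.piecewise]
    have := hf.le_add_update hw (ht j) (hwj ▸ htx j)
    rw [h_in, h_out] at this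
    linarith

theorem le_sum_piecewise [Fintype ι] (hf : ComponentwiseSubadditive f) {x t : ι → ℝ}
    (ht : ∀ i, 0 < t i) (htx : ∀ i, t i < x i) :
    f x ≤ ∑ S : Finset ι, f (S.piecewise t (x - t)) := by
  simpa using hf.le_sum_powerset_piecewise ht htx Finset.univ

theorem pi_Ioo_subset_iUnion_preimage_piecewise [Fintype ι] (hf : ComponentwiseSubadditive f)
    {A B n : ℝ} {x : ι → ℝ} (hx : ∀ i, x i ∈ Icc A B)
    (hfx : Fintype.card (Finset ι) * n < f x) :
    univ.pi (fun _ => Ioo 0 A) ⊆ ⋃ S : Finset ι,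
      (fun t => S.piecewise t (x - t)) ⁻¹' (univ.pi (fun _ => Ioo 0 B) ∩ {y | n ≤ f y}) := by
  intro t ht
  rw [mem_univ_pi] at ht
  have htx : ∀ i, t i < x i := fun i => (ht i).2.trans_le (hx i).1
  obtain ⟨S, -, hS⟩ := Finset.exists_le_of_sum_le Finset.univ_nonempty
    (f := fun _ => n) (g := fun S : Finset ι => f (S.piecewise t (x - t))) <| by
      simpa using hfx.le.trans (hf.le_sum_piecewise (fun i => (ht i).1) htx)
  refine mem_iUnion.2 ⟨S, mem_univ_pi.2 fun i => ?_, hS⟩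
  refine S.piecewise_cases t (x - t) (fun v : ℝ => v ∈ Ioo 0 B) ⟨(ht i).1, ?_⟩ ?_
  · linarith [(ht i).2, (hx i).1, (hx i).2]
  · constructor <;> simp only [Pi.sub_apply] <;> linarith [(ht i).1, htx i, (hx i).2]

theorem exists_le_of_forall_mem_Icc [Fintype ι] (hf : ComponentwiseSubadditive f)
    (hmeas : AEMeasurable f (volume.restrict {x | ∀ i, 0 < x i})) {A : ℝ} (hA : 0 < A) (B : ℝ) :
    ∃ M, ∀ x, (∀ i, x i ∈ Icc A B) → f x ≤ M := by
  set Q : Set (ι → ℝ) := univ.pi fun _ => Ioo 0 B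
  set T : Set (ι → ℝ) := univ.pi fun _ => Ioo 0 A
  set N := Fintype.card (Finset ι)
  have hQ : MeasurableSet Q := MeasurableSet.univ_pi fun _ => measurableSet_Ioo
  have : IsFiniteMeasure (volume.restrict Q) := isFiniteMeasure_restrict.2 <| by
    simp [Q, volume_pi_pi]
  have htend : Tendsto (fun n : ℕ => (N : ENNReal) * volume (Q ∩ {y | n ≤ f y})) atTop (𝓝 0) := by
    have hQpos : Q ⊆ {x | ∀ i, 0 < x i} := fun y hy i => ((mem_univ_pi.1 hy) i).1
    simpa [Measure.restrict_apply' hQ, inter_comm] using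
      ENNReal.Tendsto.const_mul (tendsto_measure_setOf_le_atTop (hmeas.mono_set hQpos))
        (.inr (ENNReal.natCast_ne_top N))
  have hT : 0 < volume T :=
    (isOpen_set_pi finite_univ fun _ _ => isOpen_Ioo).measure_pos volume
      ⟨fun _ => A / 2, by simp [hA]⟩
  obtain ⟨n, hn⟩ := (htend.eventually (gt_mem_nhds hT)).exists
  refine ⟨N * n, fun x hx => le_of_not_gt fun hfx => hn.not_ge ?_⟩
  calc volume T
      ≤ ∑ S : Finset ι, volume ((fun t => S.piecewise t (x - t)) ⁻¹' (Q ∩ {y | n ≤ f y})) :=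
        (measure_mono (hf.pi_Ioo_subset_iUnion_preimage_piecewise hx hfx)).trans
          (measure_iUnion_fintype_le _ _)
    _ ≤ ∑ _S : Finset ι, volume (Q ∩ {y | n ≤ f y}) :=
        Finset.sum_le_sum fun S _ => (measurePreserving_piecewise_sub x S).measure_preimage_le _
    _ = N * volume (Q ∩ {y | n ≤ f y}) := by simp [N]

theorem exists_ge_of_forall_mem_Icc [Fintype ι] (hf : ComponentwiseSubadditive f)
    {A B M : ℝ} (hA : 0 < A) (hAB : A ≤ B) (hM : ∀ y, (∀ i, y i ∈ Icc A (2 * B - A)) → f y ≤ M) :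
    ∃ m, ∀ x, (∀ i, x i ∈ Icc A B) → m ≤ f x := by
  set z : ι → ℝ := fun _ => 2 * B
  set R := Finset.univ.erase (Finset.univ : Finset ι)
  refine ⟨f z - R.card • M, fun x hx => ?_⟩
  have hsplit := hf.le_sum_piecewise (x := z) (t := x) (fun i => hA.trans_le (hx i).1)
    (fun i => by simp only [z]; linarith [(hx i).2])
  rw [← Finset.add_sum_erase _ _ (Finset.mem_univ _), Finset.piecewise_univ] at hsplit
  have hrest : ∑ S ∈ R, f (S.piecewise x (z - x)) ≤ R.card • M :=
    Finset.sum_le_card_nsmul _ _ _ fun S _ => hM _ fun i =>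
      S.piecewise_cases x (z - x) (fun v : ℝ => v ∈ Icc A (2 * B - A))
        ⟨(hx i).1, by linarith [(hx i).2]⟩
        (by constructor <;> simp only [z, Pi.sub_apply] <;> linarith [(hx i).1, (hx i).2])
  linarith

theorem exists_abs_le_of_forall_mem_Icc [Fintype ι] (hf : ComponentwiseSubadditive f)
    (hmeas : AEMeasurable f (volume.restrict {x | ∀ i, 0 < x i})) {A B : ℝ} (hA : 0 < A)
    (hAB : A ≤ B) : ∃ M, ∀ x, (∀ i, x i ∈ Icc A B) → |f x| ≤ M := by
  obtain ⟨M, hM⟩ := hf.exists_le_of_forall_mem_Icc hmeas hA (2 * B - A)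
  obtain ⟨m, hm⟩ := hf.exists_ge_of_forall_mem_Icc hA hAB hM
  refine ⟨max M (-m), fun x hx => abs_le.2 ⟨?_, ?_⟩⟩
  · linarith [le_max_right M (-m), hm x hx]
  · exact (hM x fun i => ⟨(hx i).1, by linarith [(hx i).2]⟩).trans (le_max_left _ _)

end ComponentwiseSubadditive

theorem componentwise_subadditive_bounded_on_compacts_pos_general
    (d : ℕ) (f : (Fin d → ℝ) → ℝ)
    (hf : ∀ (i : Fin d) (x : Fin d → ℝ) (y : ℝ), (∀ j, 0 < x j) → 0 < y →
      f (Function.update x i (x i + y)) ≤ f x + f (Function.update x i y))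
    (hmeas : AEMeasurable f (volume.restrict {x : Fin d → ℝ | ∀ i, 0 < x i})) :
    ∀ K : Set (Fin d → ℝ), K ⊆ {x | ∀ i, 0 < x i} → IsCompact K →
      ∃ M : ℝ, ∀ x ∈ K, |f x| ≤ M := by
  intro K hKpos hK
  obtain ⟨A, B, hA, hAB, hKbox⟩ := hK.exists_forall_mem_Icc_of_subset_pos hKpos
  obtain ⟨M, hM⟩ := ComponentwiseSubadditive.exists_abs_le_of_forall_mem_Icc hf hmeas hA hAB
  exact ⟨M, fun x hx => hM x (hKbox x hx)⟩

/-- A componentwise subadditive, Lebesgue-measurable function of `d` positive real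
variables is bounded on every compact subset of the open positive orthant
(equivalently, on every product of compact subintervals of `(0,∞)`). -/
theorem componentwise_subadditive_bounded_on_compacts_pos
    (d : ℕ) (hd : 1 ≤ d) (f : (Fin d → ℝ) → ℝ)
    (hf : ∀ (i : Fin d) (x : Fin d → ℝ) (y : ℝ), (∀ j, 0 < x j) → 0 < y →
      f (Function.update x i (x i + y)) ≤ f x + f (Function.update x i y))
    (hmeas : AEMeasurable f (volume.restrict {x : Fin d → ℝ | ∀ i, 0 < x i})) :
    ∀ K : Set (Fin d → ℝ), K ⊆ {x | ∀ i, 0 < x i} → IsCompact K →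
      ∃ M : ℝ, ∀ x ∈ K, |f x| ≤ M :=
  componentwise_subadditive_bounded_on_compacts_pos_general d f hf hmeas
end

section
/- Let d ≥ 1 and let f : ℤ_{>0}^d → ℝ be componentwise subadditive. Then the simultaneous limit of f(x_1,…,x_d)/(x_1⋯x_d) along the directed set of d-tuples of positive integers with the product order (each coordinate tending to +∞) exists in ℝ ∪ {−∞} and equals inf_{x_1,…,x_d ∈ ℤ_{>0}} f(x_1,…,x_d)/(x_1⋯x_d). -/
open Filter MeasureTheory Topology

section feketeaux
open Finset

private lemma fekete_aux1 {d : ℕ} (f : (Fin d → ℤ) → ℝ)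
    (hf : ∀ (i : Fin d) (x : Fin d → ℤ) (y : ℤ), (∀ j, 0 < x j) → 0 < y →
      f (Function.update x i (x i + y)) ≤ f x + f (Function.update x i y))
    (i : Fin d) (x : Fin d → ℤ) (hx : ∀ j, 0 < x j) {k r : ℤ} (hk : 0 < k) (hr : 0 < r)
    (q : ℕ) :
    f (Function.update x i ((q : ℤ) * k + r)) ≤
      q * f (Function.update x i k) + f (Function.update x i r) := by
  induction q with
  | zero => simp
  | succ q ih =>
    have hx' : ∀ j, 0 < Function.update x i k j := by
      intro j
      rcases eq_or_ne j i with rfl | h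
      · simpa using hk
      · simpa [Function.update_of_ne h] using hx j
    have h1 := hf i (Function.update x i k) ((q : ℤ) * k + r) hx' (by positivity)
    rw [Function.update_idem, Function.update_idem, Function.update_self] at h1
    have he : ((q + 1 : ℕ) : ℤ) * k + r = k + ((q : ℤ) * k + r) := by push_cast; ring
    rw [he]
    calc f (Function.update x i (k + ((q : ℤ) * k + r)))
        ≤ f (Function.update x i k) + f (Function.update x i ((q : ℤ) * k + r)) := h1
      _ ≤ f (Function.update x i k) +
          ((q : ℝ) * f (Function.update x i k) + f (Function.update x i r)) := by linarith
      _ = ((q + 1 : ℕ) : ℝ) * f (Function.update x i k) + f (Function.update x i r) := by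
          push_cast; ring

private lemma fekete_aux2 {d : ℕ} (f : (Fin d → ℤ) → ℝ)
    (hf : ∀ (i : Fin d) (x : Fin d → ℤ) (y : ℤ), (∀ j, 0 < x j) → 0 < y →
      f (Function.update x i (x i + y)) ≤ f x + f (Function.update x i y))
    (k r : Fin d → ℤ) (hk : ∀ j, 0 < k j) (hr : ∀ j, 0 < r j) (q : Fin d → ℕ)
    (T : Finset (Fin d)) :
    ∀ (x : Fin d → ℤ), (∀ j, 0 < x j) → (∀ i ∈ T, x i = (q i : ℤ) * k i + r i) →
      f x ≤ ∑ S ∈ T.powerset, (∏ i ∈ S, (q i : ℝ)) *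
        f (fun j => if j ∈ S then k j else if j ∈ T then r j else x j) := by
  induction T using Finset.induction_on with
  | empty =>
    intro x hx h
    simp
  | @insert a T haT ih =>
    intro x hx h
    have hxa : x a = (q a : ℤ) * k a + r a := h a (mem_insert_self a T)
    have hfx : f x = f (Function.update x a ((q a : ℤ) * k a + r a)) := by
      rw [← hxa, Function.update_eq_self]
    have h1 : f x ≤ (q a : ℝ) * f (Function.update x a (k a)) +
        f (Function.update x a (r a)) := by
      rw [hfx]; exact fekete_aux1 f hf a x hx (hk a) (hr a) (q a)
    have hxk : ∀ j, 0 < Function.update x a (k a) j := by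
      intro j; rcases eq_or_ne j a with rfl | hj
      · simpa using hk j
      · simpa [Function.update_of_ne hj] using hx j
    have hxr : ∀ j, 0 < Function.update x a (r a) j := by
      intro j; rcases eq_or_ne j a with rfl | hj
      · simpa using hr j
      · simpa [Function.update_of_ne hj] using hx j
    have hck : ∀ i ∈ T, Function.update x a (k a) i = (q i : ℤ) * k i + r i := by
      intro i hi
      rw [Function.update_of_ne (by rintro rfl; exact haT hi)]
      exact h i (mem_insert_of_mem hi)
    have hcr : ∀ i ∈ T, Function.update x a (r a) i = (q i : ℤ) * k i + r i := by
      intro i hi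
      rw [Function.update_of_ne (by rintro rfl; exact haT hi)]
      exact h i (mem_insert_of_mem hi)
    have ihk := ih (Function.update x a (k a)) hxk hck
    have ihr := ih (Function.update x a (r a)) hxr hcr
    have key : f x ≤ (q a : ℝ) * (∑ S ∈ T.powerset, (∏ i ∈ S, (q i : ℝ)) *
          f (fun j => if j ∈ S then k j else if j ∈ T then r j
            else Function.update x a (k a) j)) +
        ∑ S ∈ T.powerset, (∏ i ∈ S, (q i : ℝ)) *
          f (fun j => if j ∈ S then k j else if j ∈ T then r j
            else Function.update x a (r a) j) := by
      have hqa : (0 : ℝ) ≤ (q a : ℝ) := Nat.cast_nonneg _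
      nlinarith [mul_le_mul_of_nonneg_left ihk hqa]
    refine key.trans (le_of_eq ?_)
    rw [Finset.sum_powerset_insert haT, Finset.mul_sum, add_comm]
    congr 1
    · -- ∑ S in T.powerset, coeff * f (z2 S) = ∑ S in T.powerset (term for S in insert-version)
      refine Finset.sum_congr rfl fun S hS => ?_
      rw [mem_powerset] at hS
      have hz : (fun j => if j ∈ S then k j else if j ∈ T then r j
            else Function.update x a (r a) j)
          = fun j => if j ∈ S then k j else if j ∈ insert a T then r j else x j := by
        funext j
        rcases eq_or_ne j a with rfl | hj
        · have hjS : j ∉ S := fun hh => haT (hS hh)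
          have hjT : j ∉ T := haT
          simp [hjS, hjT, Function.update_self]
        · by_cases hjS : j ∈ S
          · simp [hjS]
          · by_cases hjT : j ∈ T
            · simp [hjS, hjT]
            · simp [hjS, hjT, hj, Function.update_of_ne hj]
      rw [hz]
    · -- q a * ∑ ... = ∑ S in T.powerset (term for insert a S)
      refine Finset.sum_congr rfl fun S hS => ?_
      rw [mem_powerset] at hS
      have haS : a ∉ S := fun hh => haT (hS hh)
      have hz : (fun j => if j ∈ S then k j else if j ∈ T then r j
            else Function.update x a (k a) j)
          = fun j => if j ∈ insert a S then k j else if j ∈ insert a T then r j else x j := by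
        funext j
        rcases eq_or_ne j a with rfl | hj
        · have hjS : j ∉ S := haS
          simp [hjS, haT, Function.update_self]
        · by_cases hjS : j ∈ S
          · simp [hjS, Finset.mem_insert, hj]
          · by_cases hjT : j ∈ T
            · simp [hjS, hjT, Finset.mem_insert, hj]
            · simp [hjS, hjT, Finset.mem_insert, hj, Function.update_of_ne hj]
      rw [hz, Finset.prod_insert haS]
      push_cast
      ring

private lemma fekete_aux3 {α : Type*} (s : Finset α) (t : α → ℝ)
    (h0 : ∀ i ∈ s, 0 ≤ t i) (h1 : ∀ i ∈ s, t i ≤ 1) :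
    1 - ∏ i ∈ s, t i ≤ ∑ i ∈ s, (1 - t i) := by
  classical
  induction s using Finset.induction_on with
  | empty => simp
  | @insert a s ha ih =>
    rw [Finset.prod_insert ha, Finset.sum_insert ha]
    have hP0 : 0 ≤ ∏ i ∈ s, t i :=
      Finset.prod_nonneg fun i hi => h0 i (mem_insert_of_mem hi)
    have hP1 : ∏ i ∈ s, t i ≤ 1 :=
      Finset.prod_le_one (fun i hi => h0 i (mem_insert_of_mem hi))
        (fun i hi => h1 i (mem_insert_of_mem hi))
    have hi0 := h0 a (mem_insert_self a s)
    have hi1 := h1 a (mem_insert_self a s)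
    have := ih (fun i hi => h0 i (mem_insert_of_mem hi)) (fun i hi => h1 i (mem_insert_of_mem hi))
    nlinarith

variable {d : ℕ} (f : (Fin d → ℤ) → ℝ)

private lemma fekete_aux4
    (hf : ∀ (i : Fin d) (x : Fin d → ℤ) (y : ℤ), (∀ j, 0 < x j) → 0 < y →
      f (Function.update x i (x i + y)) ≤ f x + f (Function.update x i y))
    (k : Fin d → ℤ) (hk : ∀ i, 0 < k i) {c : ℝ} (hc : f k / ∏ i, (k i : ℝ) < c) :
    ∀ᶠ x : Fin d → ℤ in atTop, f x / ∏ i, (x i : ℝ) < c := by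
  have hPk : (0 : ℝ) < ∏ i, (k i : ℝ) :=
    Finset.prod_pos fun i _ => by exact_mod_cast hk i
  set Pk := ∏ i, (k i : ℝ) with hPkdef
  set a := f k / Pk with hadef
  set δ := c - a with hδdef
  have hδ : 0 < δ := by simp [hδdef]; linarith
  have hkmem : k ∈ Finset.Icc (1 : Fin d → ℤ) k := by
    rw [Finset.mem_Icc]
    exact ⟨fun i => hk i, le_refl k⟩
  have hne : (Finset.Icc (1 : Fin d → ℤ) k).Nonempty := ⟨k, hkmem⟩
  set C := (Finset.Icc (1 : Fin d → ℤ) k).sup' hne (fun z => |f z|) with hCdef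
  have hC0 : 0 ≤ C := le_trans (abs_nonneg (f k)) (Finset.le_sup' (fun z => |f z|) hkmem)
  set B := |a| * (∑ i, (k i : ℝ)) + 2 ^ d * C with hBdef
  have hB0 : 0 ≤ B := by
    have : (0:ℝ) ≤ ∑ i, (k i : ℝ) :=
      Finset.sum_nonneg fun i _ => by exact_mod_cast (hk i).le
    positivity
  obtain ⟨N, hN⟩ := exists_int_gt (max 1 (B / δ))
  have hN1R : (1 : ℝ) < N := lt_of_le_of_lt (le_max_left _ _) hN
  have hN0R : (0 : ℝ) < N := lt_trans zero_lt_one hN1R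
  have hN1 : (1 : ℤ) ≤ N := by exact_mod_cast hN1R.le
  have hBN : B < N * δ := by
    have : B / δ < N := lt_of_le_of_lt (le_max_right _ _) hN
    calc B = B / δ * δ := by field_simp
    _ < N * δ := by exact mul_lt_mul_of_pos_right this hδ
  filter_upwards [Filter.eventually_ge_atTop (fun _ => N : Fin d → ℤ)] with x hx
  have hxN : ∀ i, N ≤ x i := fun i => hx i
  have hx1 : ∀ i, 1 ≤ x i := fun i => le_trans hN1 (hxN i)
  have hx0 : ∀ i, 0 < x i := fun i => lt_of_lt_of_le zero_lt_one (hx1 i)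
  have hxNR : ∀ i, (N : ℝ) ≤ (x i : ℝ) := fun i => by exact_mod_cast hxN i
  have hx0R : ∀ i, (0 : ℝ) < (x i : ℝ) := fun i => by exact_mod_cast hx0 i
  have hP : (0 : ℝ) < ∏ i, (x i : ℝ) := Finset.prod_pos fun i _ => hx0R i
  set P := ∏ i, (x i : ℝ) with hPdef
  -- division with remainder
  set qz : Fin d → ℤ := fun i => (x i - 1) / k i with hqzdef
  have hqz0 : ∀ i, 0 ≤ qz i := fun i => Int.ediv_nonneg (by linarith [hx1 i]) (hk i).le
  set q : Fin d → ℕ := fun i => (qz i).toNat with hqdef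
  have hqcast : ∀ i, ((q i : ℤ)) = qz i := fun i => Int.toNat_of_nonneg (hqz0 i)
  set r : Fin d → ℤ := fun i => x i - k i * qz i with hrdef
  have hdm : ∀ i, k i * qz i + (x i - 1) % k i = x i - 1 := fun i => Int.mul_ediv_add_emod _ _
  have hr_eq : ∀ i, r i = (x i - 1) % k i + 1 := fun i => by
    have := hdm i; simp only [hrdef]; linarith
  have hr1 : ∀ i, 0 < r i := fun i => by
    have h1 := Int.emod_nonneg (x i - 1) (ne_of_gt (hk i))
    rw [hr_eq i]; linarith
  have hrk : ∀ i, r i ≤ k i := fun i => by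
    have h1 := Int.emod_lt_of_pos (x i - 1) (hk i)
    rw [hr_eq i]; linarith
  have hdecomp : ∀ i ∈ (Finset.univ : Finset (Fin d)), x i = (q i : ℤ) * k i + r i := by
    intro i _
    rw [hqcast i]; simp only [hrdef]; ring
  have h2 := fekete_aux2 f hf k r hk hr1 q Finset.univ x hx0 hdecomp
  have hz : ∀ S : Finset (Fin d),
      (fun j => if j ∈ S then k j else if j ∈ (Finset.univ : Finset (Fin d)) then r j else x j)
        = fun j => if j ∈ S then k j else r j := by
    intro S; funext j; simp
  simp only [hz] at h2
  -- membership of the mixed points in the box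
  have hzmem : ∀ S : Finset (Fin d),
      (fun j => if j ∈ S then k j else r j) ∈ Finset.Icc (1 : Fin d → ℤ) k := by
    intro S
    rw [Finset.mem_Icc]
    constructor
    · intro j
      by_cases hj : j ∈ S
      · have := hk j; simp only [hj, if_true, Pi.one_apply]; omega
      · have := hr1 j; simp only [hj, if_false, Pi.one_apply]; omega
    · intro j; by_cases hj : j ∈ S <;> simp [hj, hrk j]
  have hfzC : ∀ S : Finset (Fin d), |f (fun j => if j ∈ S then k j else r j)| ≤ C :=
    fun S => Finset.le_sup' (fun z => |f z|) (hzmem S)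
  -- q i ≤ x i
  have hqx : ∀ i, (q i : ℝ) ≤ (x i : ℝ) := by
    intro i
    have h1 : qz i ≤ x i - 1 := Int.ediv_le_self _ (by linarith [hx1 i])
    have : (q i : ℤ) ≤ x i := by rw [hqcast i]; linarith
    exact_mod_cast this
  have hq0R : ∀ i, (0:ℝ) ≤ (q i : ℝ) := fun i => Nat.cast_nonneg _
  -- divide by P
  have h3 : f x / P ≤ (∑ S ∈ (Finset.univ : Finset (Fin d)).powerset,
      (∏ i ∈ S, (q i : ℝ)) * f (fun j => if j ∈ S then k j else r j)) / P :=
    (div_le_div_iff_of_pos_right hP).mpr h2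
  rw [Finset.sum_div] at h3
  have huniv : (Finset.univ : Finset (Fin d)) ∈ (Finset.univ : Finset (Fin d)).powerset :=
    Finset.mem_powerset.mpr (le_refl _)
  rw [← Finset.sum_erase_add _ _ huniv] at h3
  -- error terms
  have herr : ∀ S ∈ ((Finset.univ : Finset (Fin d)).powerset).erase Finset.univ,
      (∏ i ∈ S, (q i : ℝ)) * f (fun j => if j ∈ S then k j else r j) / P ≤ C / N := by
    intro S hS
    rw [Finset.mem_erase, Finset.mem_powerset] at hS
    obtain ⟨hSne, _⟩ := hS
    obtain ⟨j, hj⟩ : ∃ j, j ∉ S := by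
      by_contra hcon
      push_neg at hcon
      exact hSne (Finset.eq_univ_iff_forall.mpr hcon)
    have hq_prod_nonneg : (0:ℝ) ≤ ∏ i ∈ S, (q i : ℝ) :=
      Finset.prod_nonneg fun i _ => hq0R i
    have step1 : (∏ i ∈ S, (q i : ℝ)) * f (fun j => if j ∈ S then k j else r j)
        ≤ (∏ i ∈ S, (x i : ℝ)) * C := by
      have h4 : f (fun j => if j ∈ S then k j else r j) ≤ C :=
        le_trans (le_abs_self _) (hfzC S)
      have h5 : (∏ i ∈ S, (q i : ℝ)) ≤ ∏ i ∈ S, (x i : ℝ) :=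
        Finset.prod_le_prod (fun i _ => hq0R i) (fun i _ => hqx i)
      have h6 : (∏ i ∈ S, (q i : ℝ)) * f (fun j => if j ∈ S then k j else r j)
          ≤ (∏ i ∈ S, (q i : ℝ)) * C := by
        rcases le_or_gt (f (fun j => if j ∈ S then k j else r j)) C with h | h
        · exact mul_le_mul_of_nonneg_left h4 hq_prod_nonneg
        · linarith
      exact h6.trans (mul_le_mul_of_nonneg_right h5 hC0)
    have hcompl : (N : ℝ) ≤ ∏ i ∈ Sᶜ, (x i : ℝ) := by
      have hjc : j ∈ Sᶜ := Finset.mem_compl.mpr hj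
      have h1 : (1:ℝ) ≤ ∏ i ∈ Sᶜ.erase j, (x i : ℝ) := by
        calc (1:ℝ) = ∏ _i ∈ Sᶜ.erase j, (1:ℝ) := (Finset.prod_const_one).symm
          _ ≤ ∏ i ∈ Sᶜ.erase j, (x i : ℝ) :=
              Finset.prod_le_prod (fun i _ => zero_le_one)
                (fun i _ => by exact_mod_cast hx1 i)
      calc (N : ℝ) ≤ (x j : ℝ) := hxNR j
        _ ≤ (x j : ℝ) * ∏ i ∈ Sᶜ.erase j, (x i : ℝ) :=
            le_mul_of_one_le_right (hx0R j).le h1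
        _ = ∏ i ∈ Sᶜ, (x i : ℝ) := Finset.mul_prod_erase Sᶜ (fun i => ((x i : ℝ))) hjc
    have hSprod0 : (0:ℝ) < ∏ i ∈ S, (x i : ℝ) := Finset.prod_pos fun i _ => hx0R i
    have hcompl0 : (0:ℝ) < ∏ i ∈ Sᶜ, (x i : ℝ) := Finset.prod_pos fun i _ => hx0R i
    have hPsplit : P = (∏ i ∈ S, (x i : ℝ)) * ∏ i ∈ Sᶜ, (x i : ℝ) :=
      (Finset.prod_mul_prod_compl S _).symm
    calc (∏ i ∈ S, (q i : ℝ)) * f (fun j => if j ∈ S then k j else r j) / P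
        ≤ (∏ i ∈ S, (x i : ℝ)) * C / P := (div_le_div_iff_of_pos_right hP).mpr step1
      _ = C / ∏ i ∈ Sᶜ, (x i : ℝ) := by
          rw [hPsplit]; field_simp
      _ ≤ C / N := by
          apply div_le_div_of_nonneg_left hC0 hN0R hcompl
  set E := ((Finset.univ : Finset (Fin d)).powerset).erase Finset.univ with hEdef
  have hcard : ((E.card : ℝ)) ≤ 2 ^ d := by
    have h1 : E.card ≤ 2 ^ d := by
      calc E.card ≤ ((Finset.univ : Finset (Fin d)).powerset).card := Finset.card_erase_le
      _ = 2 ^ d := by rw [Finset.card_powerset, Finset.card_univ, Fintype.card_fin]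
    exact_mod_cast h1
  have herrsum : ∑ S ∈ E, (∏ i ∈ S, (q i : ℝ)) *
      f (fun j => if j ∈ S then k j else r j) / P ≤ 2 ^ d * (C / N) := by
    calc ∑ S ∈ E, (∏ i ∈ S, (q i : ℝ)) * f (fun j => if j ∈ S then k j else r j) / P
        ≤ ∑ _S ∈ E, C / (N : ℝ) := Finset.sum_le_sum herr
      _ = (E.card : ℝ) * (C / N) := by rw [Finset.sum_const, nsmul_eq_mul]
      _ ≤ 2 ^ d * (C / N) :=
          mul_le_mul_of_nonneg_right hcard (div_nonneg hC0 hN0R.le)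
  -- main term
  have hzuniv : (fun j => if j ∈ (Finset.univ : Finset (Fin d)) then k j else r j) = k := by
    funext j; simp
  rw [hzuniv] at h3
  set ti : Fin d → ℝ := fun i => (q i : ℝ) * k i / x i with htidef
  have hxrR : ∀ i, (x i : ℝ) = (q i : ℝ) * k i + r i := by
    intro i; exact_mod_cast hdecomp i (Finset.mem_univ i)
  have hr0R : ∀ i, (0:ℝ) < (r i : ℝ) := fun i => by exact_mod_cast hr1 i
  have hti0 : ∀ i, 0 ≤ ti i := fun i =>
    div_nonneg (mul_nonneg (hq0R i) (by exact_mod_cast (hk i).le)) (hx0R i).le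
  have hti1 : ∀ i, ti i ≤ 1 := by
    intro i
    rw [htidef, div_le_one (hx0R i)]
    have := hxrR i
    have := hr0R i
    linarith
  have hu0 : 0 ≤ ∏ i, ti i := Finset.prod_nonneg fun i _ => hti0 i
  have hu1 : ∏ i, ti i ≤ 1 :=
    Finset.prod_le_one (fun i _ => hti0 i) (fun i _ => hti1 i)
  have h1ti : ∀ i, 1 - ti i ≤ (k i : ℝ) / N := by
    intro i
    have hkR : (0:ℝ) < (k i : ℝ) := by exact_mod_cast hk i
    have hxne : (x i : ℝ) ≠ 0 := ne_of_gt (hx0R i)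
    have heq : 1 - ti i = (r i : ℝ) / x i := by
      rw [htidef]
      have h9 := hxrR i
      field_simp
      linarith
    rw [heq]
    exact div_le_div₀ hkR.le (by exact_mod_cast hrk i) hN0R (hxNR i)
  have hsum : 1 - ∏ i, ti i ≤ (∑ i, (k i : ℝ)) / N := by
    calc 1 - ∏ i, ti i ≤ ∑ i, (1 - ti i) :=
          fekete_aux3 Finset.univ ti (fun i _ => hti0 i) (fun i _ => hti1 i)
      _ ≤ ∑ i, (k i : ℝ) / N := Finset.sum_le_sum fun i _ => h1ti i
      _ = (∑ i, (k i : ℝ)) / N := by rw [Finset.sum_div]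
  have hmaineq : (∏ i ∈ (Finset.univ : Finset (Fin d)), (q i : ℝ)) * f k / P
      = (∏ i, ti i) * a := by
    have hprodti : ∏ i, ti i = (∏ i, (q i : ℝ)) * Pk / P := by
      rw [htidef]
      rw [show (fun i => (q i:ℝ) * k i / (x i:ℝ)) = fun i => ((q i:ℝ) * k i) / (x i:ℝ) from rfl]
      rw [Finset.prod_div_distrib, Finset.prod_mul_distrib]
    rw [hprodti, hadef]
    field_simp
  have hmain : (∏ i, ti i) * a ≤ a + (∑ i, (k i : ℝ)) / N * |a| := by
    set u := ∏ i, ti i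
    set s := (∑ i, (k i : ℝ)) / N
    have key1 : (0:ℝ) ≤ (1 - u) * (|a| + a) :=
      mul_nonneg (by linarith) (by linarith [neg_abs_le a])
    have key2 : (1 - u) * |a| ≤ s * |a| :=
      mul_le_mul_of_nonneg_right (by linarith) (abs_nonneg a)
    nlinarith
  have hBdiv : B / N < δ := (div_lt_iff₀ hN0R).mpr (by linarith [hBN])
  have hBsplit : B / N = |a| * ((∑ i, (k i : ℝ)) / N) + 2 ^ d * (C / N) := by
    rw [hBdef]; field_simp
  have hfinal : f x / P ≤ a + B / N := by
    rw [hmaineq] at h3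
    calc f x / P ≤ (∑ S ∈ E, (∏ i ∈ S, (q i : ℝ)) *
          f (fun j => if j ∈ S then k j else r j) / P) + (∏ i, ti i) * a := h3
      _ ≤ 2 ^ d * (C / N) + (a + (∑ i, (k i : ℝ)) / N * |a|) := add_le_add herrsum hmain
      _ = a + B / N := by rw [hBsplit]; ring
  calc f x / P ≤ a + B / N := hfinal
    _ < a + δ := by linarith
    _ = c := by rw [hδdef]; ring

end feketeaux

/-- **Fekete's lemma in ℤ_{>0}^d.**  If `f` is a componentwise subadditive function
of `d` positive integer variables, then `f(x₁,…,x_d)/(x₁⋯x_d)` converges, along the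
directed set of `d`-tuples of positive integers with the product order (i.e. the
`atTop` filter), to its infimum over all positive integer tuples
(possibly `−∞`). -/
theorem fekete_lemma_simultaneous_limit_pos_integers
    (d : ℕ) (hd : 1 ≤ d) (f : (Fin d → ℤ) → ℝ)
    (hf : ∀ (i : Fin d) (x : Fin d → ℤ) (y : ℤ), (∀ j, 0 < x j) → 0 < y →
      f (Function.update x i (x i + y)) ≤ f x + f (Function.update x i y)) :
    Tendsto (fun x : Fin d → ℤ => ((f x / ∏ i, (x i : ℝ) : ℝ) : EReal)) atTop
      (𝓝 (⨅ x ∈ {x : Fin d → ℤ | ∀ i, 0 < x i},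
        ((f x / ∏ i, (x i : ℝ) : ℝ) : EReal))) := by
  refine tendsto_order.2 ⟨?_, ?_⟩
  · intro a ha
    filter_upwards [Filter.eventually_ge_atTop (fun _ => (1:ℤ) : Fin d → ℤ)] with x hx
    have hx' : x ∈ {x : Fin d → ℤ | ∀ i, 0 < x i} :=
      fun i => lt_of_lt_of_le zero_lt_one (hx i)
    exact lt_of_lt_of_le ha (iInf₂_le x hx')
  · intro b hb
    simp only [iInf_lt_iff, Set.mem_setOf_eq] at hb
    obtain ⟨k, hk, hkb⟩ := hb
    obtain ⟨c, hc1, hc2⟩ := EReal.exists_between_coe_real hkb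
    have hc1' : f k / ∏ i, (k i : ℝ) < c := by exact_mod_cast hc1
    filter_upwards [fekete_aux4 f hf k hk hc1'] with x hx
    exact lt_trans (by exact_mod_cast hx) hc2
end

section
/- Let f : ℝ_{>0}² → ℝ be Lebesgue measurable and subadditive in each variable however given the other. Then: (1) for every δ > 0 there exists R > 0 such that whenever x_1 > R and x_2 > R, f(x_1,x_2)/(x_1·x_2) < inf_{x_1,x_2>0} f(x_1,x_2)/(x_1·x_2) + δ; and (2) lim_{x_1→+∞} lim_{x_2→+∞} f(x_1,x_2)/(x_1·x_2) = lim_{x_2→+∞} lim_{x_1→+∞} f(x_1,x_2)/(x_1·x_2) = inf_{x_1,x_2>0} f(x_1,x_2)/(x_1·x_2). -/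
/-!
Measurability gives local upper bounds: off a set of small measure `f ≤ c` on the box
`(0, x₁) × (0, x₂)`, and since the reflections `pᵢ ↦ xᵢ - pᵢ` preserve the box and its measure,
some `p` has all four points `(p₁ or x₁ - p₁, p₂ or x₂ - p₂)` in the good set; splitting
`xᵢ = pᵢ + (xᵢ - pᵢ)` then gives `f(x₁, x₂) ≤ 4c`.

With `f ≤ C` on `[y₁, 2y₁] × [y₂, 2y₂]`, write `xᵢ = kᵢ yᵢ + rᵢ` with `rᵢ ∈ [yᵢ, 2yᵢ]`;
subadditivity gives `f(x₁, x₂) ≤ k₁ k₂ f(y₁, y₂) + (k₁ + k₂ + 1) C`, so the joint `limsup` of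
`f(x₁, x₂) / (x₁ x₂)` is at most `f(y₁, y₂) / (y₁ y₂)`, which proves (1). The one-variable
version of this estimate shows that each inner limit equals the corresponding partial infimum,
and (1) then forces the outer limits to be the full infimum.
-/

open Filter MeasureTheory Topology Set
open scoped ENNReal

def SubadditiveOnPos (φ : ℝ → ℝ) : Prop :=
  ∀ a b : ℝ, 0 < a → 0 < b → φ (a + b) ≤ φ a + φ b

theorem EReal.tendsto_nhds_of_eventually_ge_of_forall_lt {α : Type*} {l : Filter α}
    {u : α → EReal} {L : EReal} (hge : ∀ᶠ x in l, L ≤ u x)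
    (hlt : ∀ m : ℝ, L < m → ∀ᶠ x in l, u x < m) : Tendsto u l (𝓝 L) := by
  refine tendsto_order.2 ⟨fun c hc => hge.mono fun x hx => hc.trans_le hx, fun c hc => ?_⟩
  obtain ⟨m, hLm, hmc⟩ := EReal.lt_iff_exists_real_btwn.1 hc
  exact (hlt m hLm).mono fun x hx => hx.trans hmc

theorem AEMeasurable.exists_measure_setOf_lt_lt {α : Type*} [MeasurableSpace α] {μ : Measure α}
    [IsFiniteMeasure μ] {g : α → ℝ} (hg : AEMeasurable g μ)
    {ε : ℝ≥0∞} (hε : 0 < ε) :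
    ∃ c : ℝ, μ {x | c < g x} < ε := by
  have hlim : Tendsto (fun c : ℝ => μ {x | c < g x}) atTop (𝓝 0) := by
    have h := tendsto_measure_iInter_atTop (μ := μ) (s := fun c : ℝ => {x | c < g x})
      (fun c => hg.nullMeasurable measurableSet_Ioi) (fun c d hcd x hx => hcd.trans_lt hx)
      ⟨0, measure_ne_top μ _⟩
    have hempty : (⋂ c : ℝ, {x | c < g x}) = ∅ :=
      iInter_eq_empty_iff.2 fun x => ⟨g x, lt_irrefl (g x)⟩
    rwa [hempty, measure_empty] at h
  exact (hlim.eventually (gt_mem_nhds hε)).exists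

/-- The remainder is kept in `[y, 2y]` rather than `[0, y)` because a subadditive function
need not be bounded above near `0`. -/
theorem sub_floor_div_sub_one_mul_mem_Icc {x y : ℝ} (hy : 0 < y) (hx : y ≤ x) :
    x - ⌊x / y - 1⌋₊ * y ∈ Icc y (2 * y) := by
  have hxy : 1 ≤ x / y := (one_le_div hy).2 hx
  have hle := Nat.floor_le (sub_nonneg.2 hxy)
  have hlt := Nat.lt_floor_add_one (x / y - 1)
  have hx' : x = x / y * y := (div_mul_cancel₀ x hy.ne').symm
  constructor <;> nlinarith

theorem tendsto_floor_div_sub_one_div {y : ℝ} (hy : 0 < y) :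
    Tendsto (fun x => (⌊x / y - 1⌋₊ : ℝ) / x) atTop (𝓝 y⁻¹) := by
  have h0 : Tendsto (fun x : ℝ => 2 / x) atTop (𝓝 0) := tendsto_const_nhds.div_atTop tendsto_id
  have hlow : Tendsto (fun x : ℝ => y⁻¹ - 2 / x) atTop (𝓝 y⁻¹) := by
    simpa using (tendsto_const_nhds (x := y⁻¹)).sub h0
  refine tendsto_of_tendsto_of_tendsto_of_le_of_le' hlow tendsto_const_nhds ?_ ?_ <;>
    filter_upwards [eventually_ge_atTop y] with x hyx
  all_goals
    have hr := sub_floor_div_sub_one_mul_mem_Icc hy hyx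
    have hx : 0 < x := hy.trans_le hyx
  · rw [le_div_iff₀ hx, show (y⁻¹ - 2 / x) * x = (x - 2 * y) / y by field_simp,
      div_le_iff₀ hy]
    linarith [hr.2]
  · rw [div_le_iff₀ hx, inv_mul_eq_div, le_div_iff₀ hy]
    linarith [hr.1]

theorem volume_preimage_prodMap {g1 g2 : ℝ → ℝ}
    (hg1 : MeasurePreserving g1 volume volume) (hg1' : MeasurableEmbedding g1)
    (hg2 : MeasurePreserving g2 volume volume) (hg2' : MeasurableEmbedding g2)
    (s : Set (ℝ × ℝ)) :
    volume (Prod.map g1 g2 ⁻¹' s) = volume s := by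
  rw [Measure.volume_eq_prod]
  exact (hg1.prod hg2).measure_preimage_emb (hg1'.prodMap hg2') s

namespace SubadditiveOnPos

variable {φ : ℝ → ℝ}

theorem le_natCast_mul_add (hφ : SubadditiveOnPos φ) {y r : ℝ} (hy : 0 < y) (hr : 0 < r) (n : ℕ) :
    φ (n * y + r) ≤ n * φ y + φ r := by
  induction n with
  | zero => simp
  | succ n ih =>
    have := hφ y (n * y + r) hy (by positivity)
    push_cast
    calc φ ((n + 1) * y + r) = φ (y + (n * y + r)) := by ring_nf
      _ ≤ (n + 1) * φ y + φ r := by linarith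

theorem le_floor_mul_add (hφ : SubadditiveOnPos φ) {x y : ℝ} (hy : 0 < y) (hx : y ≤ x) :
    φ x ≤ ⌊x / y - 1⌋₊ * φ y + φ (x - ⌊x / y - 1⌋₊ * y) := by
  have hr := sub_floor_div_sub_one_mul_mem_Icc hy hx
  simpa using hφ.le_natCast_mul_add hy (hy.trans_le hr.1) ⌊x / y - 1⌋₊

theorem div_const (hφ : SubadditiveOnPos φ) {c : ℝ} (hc : 0 ≤ c) :
    SubadditiveOnPos (φ · / c) := fun a b ha hb => by
  rw [← add_div]; exact div_le_div_of_nonneg_right (hφ a b ha hb) hc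

theorem eventually_div_lt (hφ : SubadditiveOnPos φ) {y m : ℝ} (hy : 0 < y)
    (hbdd : BddAbove (φ '' Icc y (2 * y))) (hm : φ y / y < m) :
    ∀ᶠ x in atTop, φ x / x < m := by
  obtain ⟨C, hC⟩ := hbdd
  have hlim : Tendsto (fun x => (⌊x / y - 1⌋₊ : ℝ) / x * φ y + C / x) atTop
      (𝓝 (φ y / y)) := by
    simpa [div_eq_inv_mul] using
      ((tendsto_floor_div_sub_one_div hy).mul_const (φ y)).add
        (tendsto_const_nhds.div_atTop tendsto_id)
  filter_upwards [hlim.eventually (gt_mem_nhds hm), eventually_ge_atTop y] with x hxm hyx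
  have hx : 0 < x := hy.trans_le hyx
  have hle : φ x ≤ ⌊x / y - 1⌋₊ * φ y + C :=
    (hφ.le_floor_mul_add hy hyx).trans
      (add_le_add_right (hC (mem_image_of_mem φ (sub_floor_div_sub_one_mul_mem_Icc hy hyx))) _)
  calc φ x / x ≤ (⌊x / y - 1⌋₊ * φ y + C) / x := by gcongr
    _ = (⌊x / y - 1⌋₊ : ℝ) / x * φ y + C / x := by ring
    _ < m := hxm

theorem tendsto_div_atTop (hφ : SubadditiveOnPos φ)
    (hbdd : ∀ y, 0 < y → BddAbove (φ '' Icc y (2 * y))) :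
    Tendsto (fun x => ((φ x / x : ℝ) : EReal)) atTop
      (𝓝 (⨅ x ∈ Ioi (0 : ℝ), ((φ x / x : ℝ) : EReal))) := by
  refine EReal.tendsto_nhds_of_eventually_ge_of_forall_lt
    ((eventually_gt_atTop 0).mono fun x hx => iInf₂_le x hx) fun m hm => ?_
  obtain ⟨y, hy, hym⟩ : ∃ y ∈ Ioi (0 : ℝ), ((φ y / y : ℝ) : EReal) < m := by
    simpa only [iInf_lt_iff, exists_prop] using hm
  exact (hφ.eventually_div_lt hy (hbdd y hy) (EReal.coe_lt_coe_iff.1 hym)).mono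
    fun x hx => EReal.coe_lt_coe_iff.2 hx

end SubadditiveOnPos

def SubadditiveInEach (f : ℝ → ℝ → ℝ) : Prop :=
  (∀ x2, 0 < x2 → SubadditiveOnPos (f · x2)) ∧ ∀ x1, 0 < x1 → SubadditiveOnPos (f x1)

namespace SubadditiveInEach

variable {f : ℝ → ℝ → ℝ}

theorem swap (hf : SubadditiveInEach f) : SubadditiveInEach (fun a b => f b a) := ⟨hf.2, hf.1⟩

theorem le_add_add_add (hf : SubadditiveInEach f) {p1 p2 x1 x2 : ℝ}
    (hp1 : p1 ∈ Ioo 0 x1) (hp2 : p2 ∈ Ioo 0 x2) :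
    f x1 x2 ≤ f p1 p2 + f (x1 - p1) p2 + f p1 (x2 - p2) + f (x1 - p1) (x2 - p2) := by
  obtain ⟨hp1, hpx1⟩ := hp1
  obtain ⟨hp2, hpx2⟩ := hp2
  have e1 := hf.1 x2 (hp2.trans hpx2) p1 (x1 - p1) hp1 (sub_pos.2 hpx1)
  have e2 := hf.2 p1 hp1 p2 (x2 - p2) hp2 (sub_pos.2 hpx2)
  have e3 := hf.2 (x1 - p1) (sub_pos.2 hpx1) p2 (x2 - p2) hp2 (sub_pos.2 hpx2)
  simp only [add_sub_cancel] at e1 e2 e3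
  linarith

theorem le_four_mul_of_volume_lt (hf : SubadditiveInEach f) {x1 x2 c : ℝ} (hx1 : 0 < x1)
    (hvol : volume ({p : ℝ × ℝ | c < f p.1 p.2} ∩ Ioo 0 x1 ×ˢ Ioo 0 x2) <
      ENNReal.ofReal (x1 * x2 / 4)) :
    f x1 x2 ≤ 4 * c := by
  set B := Ioo 0 x1 ×ˢ Ioo 0 x2
  set S := {p : ℝ × ℝ | c < f p.1 p.2} ∩ B
  have hid := MeasurePreserving.id (volume : Measure ℝ)
  have hs1 := Measure.measurePreserving_sub_left volume x1
  have hs2 := Measure.measurePreserving_sub_left volume x2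
  have he1 : MeasurableEmbedding (x1 - ·) := (Homeomorph.subLeft x1).measurableEmbedding
  have he2 : MeasurableEmbedding (x2 - ·) := (Homeomorph.subLeft x2).measurableEmbedding
  have hei : MeasurableEmbedding (id : ℝ → ℝ) := MeasurableEmbedding.id
  -- the three reflections of `B` preserve `B` and Lebesgue measure
  set U := S ∪ Prod.map (x1 - ·) id ⁻¹' S ∪ Prod.map id (x2 - ·) ⁻¹' S ∪
    Prod.map (x1 - ·) (x2 - ·) ⁻¹' S
  have hU : volume U < volume B := by
    calc volume U ≤ volume S + volume (Prod.map (x1 - ·) id ⁻¹' S) +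
          volume (Prod.map id (x2 - ·) ⁻¹' S) + volume (Prod.map (x1 - ·) (x2 - ·) ⁻¹' S) :=
          (measure_union_le _ _).trans (add_le_add_left ((measure_union_le _ _).trans
            (add_le_add_left (measure_union_le _ _) _)) _)
      _ = 4 * volume S := by
          rw [volume_preimage_prodMap hs1 he1 hid hei, volume_preimage_prodMap hid hei hs2 he2,
            volume_preimage_prodMap hs1 he1 hs2 he2]
          ring
      _ < 4 * ENNReal.ofReal (x1 * x2 / 4) := by gcongr; norm_num
      _ = volume B := by
          rw [Measure.volume_eq_prod, Measure.prod_prod, Real.volume_Ioo, Real.volume_Ioo,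
            ← ENNReal.ofReal_ofNat 4, ← ENNReal.ofReal_mul (by norm_num),
            ← ENNReal.ofReal_mul (by linarith)]
          ring_nf
  obtain ⟨p, hpB, hpU⟩ : (B \ U).Nonempty :=
    nonempty_of_measure_ne_zero ((tsub_pos_of_lt hU).trans_le (le_measure_sdiff)).ne'
  have hmemB : ∀ a b, 0 < a → a < x1 → 0 < b → b < x2 → (a, b) ∈ B :=
    fun a b ha hax hb hbx => ⟨⟨ha, hax⟩, hb, hbx⟩
  have hle : ∀ q ∈ B, q ∉ S → f q.1 q.2 ≤ c :=
    fun q hq hqS => not_lt.1 fun h => hqS ⟨h, hq⟩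
  simp only [U, mem_union, not_or, mem_preimage, Prod.map, id] at hpU
  obtain ⟨⟨⟨h00, h10⟩, h01⟩, h11⟩ := hpU
  obtain ⟨⟨hp1, hpx1⟩, hp2, hpx2⟩ := hpB
  have := hf.le_add_add_add (x1 := x1) (x2 := x2) ⟨hp1, hpx1⟩ ⟨hp2, hpx2⟩
  linarith [hle p ⟨⟨hp1, hpx1⟩, hp2, hpx2⟩ h00,
    hle _ (hmemB _ _ (by linarith) (by linarith) hp2 hpx2) h10,
    hle _ (hmemB _ _ hp1 hpx1 (by linarith) (by linarith)) h01,
    hle _ (hmemB _ _ (by linarith) (by linarith) (by linarith) (by linarith)) h11]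

theorem bddAbove_image_Icc_prod (hf : SubadditiveInEach f)
    (hmeas : AEMeasurable (fun p : ℝ × ℝ => f p.1 p.2)
      (volume.restrict {p : ℝ × ℝ | 0 < p.1 ∧ 0 < p.2}))
    {y1 y2 : ℝ} (hy1 : 0 < y1) (hy2 : 0 < y2) :
    BddAbove (Function.uncurry f '' Icc y1 (2 * y1) ×ˢ Icc y2 (2 * y2)) := by
  set B := Ioo 0 (2 * y1) ×ˢ Ioo 0 (2 * y2)
  have hBQ : B ⊆ {p : ℝ × ℝ | 0 < p.1 ∧ 0 < p.2} := fun p hp => ⟨hp.1.1, hp.2.1⟩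
  have : IsFiniteMeasure (volume.restrict B) :=
    isFiniteMeasure_restrict.2 ((Metric.isBounded_Ioo _ _).prod
      (Metric.isBounded_Ioo _ _)).measure_lt_top.ne
  obtain ⟨c, hc⟩ :=
    (hmeas.mono_measure (Measure.restrict_mono hBQ le_rfl)).exists_measure_setOf_lt_lt
      (ENNReal.ofReal_pos.2 (by positivity : 0 < y1 * y2 / 4))
  rw [Measure.restrict_apply' (measurableSet_Ioo.prod measurableSet_Ioo)] at hc
  refine ⟨4 * c, ?_⟩
  rintro _ ⟨⟨x1, x2⟩, ⟨hx1, hx2⟩, rfl⟩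
  refine hf.le_four_mul_of_volume_lt (hy1.trans_le hx1.1) ?_
  refine lt_of_le_of_lt (measure_mono (inter_subset_inter_right _ ?_)) (hc.trans_le ?_)
  · exact prod_mono (Ioo_subset_Ioo_right (by linarith [hx1.2]))
      (Ioo_subset_Ioo_right (by linarith [hx2.2]))
  · exact ENNReal.ofReal_le_ofReal (by gcongr <;> linarith [hx1.1, hx2.1])

theorem le_floor_mul_floor_mul_add (hf : SubadditiveInEach f) {x1 x2 y1 y2 C : ℝ}
    (hy1 : 0 < y1) (hy2 : 0 < y2)
    (hC : ∀ a ∈ Icc y1 (2 * y1), ∀ b ∈ Icc y2 (2 * y2), f a b ≤ C)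
    (hx1 : y1 ≤ x1) (hx2 : y2 ≤ x2) :
    f x1 x2 ≤ ⌊x1 / y1 - 1⌋₊ * ⌊x2 / y2 - 1⌋₊ * f y1 y2 +
      (⌊x1 / y1 - 1⌋₊ + ⌊x2 / y2 - 1⌋₊ + 1) * C := by
  have hr1 := sub_floor_div_sub_one_mul_mem_Icc hy1 hx1
  have hr2 := sub_floor_div_sub_one_mul_mem_Icc hy2 hx2
  have hy1' : y1 ∈ Icc y1 (2 * y1) := ⟨le_rfl, by linarith⟩
  have hy2' : y2 ∈ Icc y2 (2 * y2) := ⟨le_rfl, by linarith⟩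
  set k : ℝ := (⌊x1 / y1 - 1⌋₊ : ℝ)
  set l : ℝ := (⌊x2 / y2 - 1⌋₊ : ℝ)
  set r1 := x1 - k * y1
  have e1 : f x1 x2 ≤ k * f y1 x2 + f r1 x2 :=
    (hf.1 x2 (hy2.trans_le hx2)).le_floor_mul_add hy1 hx1
  have e2 : f y1 x2 ≤ l * f y1 y2 + C :=
    ((hf.2 y1 hy1).le_floor_mul_add hy2 hx2).trans (add_le_add_right (hC _ hy1' _ hr2) _)
  have e3 : f r1 x2 ≤ l * C + C :=
    ((hf.2 r1 (hy1.trans_le hr1.1)).le_floor_mul_add hy2 hx2).trans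
      (add_le_add (mul_le_mul_of_nonneg_left (hC _ hr1 _ hy2') (Nat.cast_nonneg _))
        (hC _ hr1 _ hr2))
  have e4 := mul_le_mul_of_nonneg_left e2 (Nat.cast_nonneg _ : (0 : ℝ) ≤ k)
  linarith

theorem eventually_div_mul_lt (hf : SubadditiveInEach f) {y1 y2 m : ℝ}
    (hy1 : 0 < y1) (hy2 : 0 < y2)
    (hbdd : BddAbove (Function.uncurry f '' Icc y1 (2 * y1) ×ˢ Icc y2 (2 * y2)))
    (hm : f y1 y2 / (y1 * y2) < m) :
    ∀ᶠ x in atTop ×ˢ atTop, f x.1 x.2 / (x.1 * x.2) < m := by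
  obtain ⟨C, hC⟩ := hbdd
  have hC' : ∀ a ∈ Icc y1 (2 * y1), ∀ b ∈ Icc y2 (2 * y2), f a b ≤ C :=
    fun a ha b hb => hC (mem_image_of_mem _ (mk_mem_prod ha hb))
  set K : ℝ → ℝ := fun x => (⌊x / y1 - 1⌋₊ : ℝ) / x
  set L : ℝ → ℝ := fun x => (⌊x / y2 - 1⌋₊ : ℝ) / x
  have hK : Tendsto (fun x : ℝ × ℝ => K x.1) (atTop ×ˢ atTop) (𝓝 y1⁻¹) :=
    (tendsto_floor_div_sub_one_div hy1).comp tendsto_fst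
  have hL : Tendsto (fun x : ℝ × ℝ => L x.2) (atTop ×ˢ atTop) (𝓝 y2⁻¹) :=
    (tendsto_floor_div_sub_one_div hy2).comp tendsto_snd
  have hinv : Tendsto (fun x : ℝ => x⁻¹) atTop (𝓝 0) := tendsto_inv_atTop_zero
  have hI1 : Tendsto (fun x : ℝ × ℝ => x.1⁻¹) (atTop ×ˢ atTop) (𝓝 0) :=
    hinv.comp tendsto_fst
  have hI2 : Tendsto (fun x : ℝ × ℝ => x.2⁻¹) (atTop ×ˢ atTop) (𝓝 0) :=
    hinv.comp tendsto_snd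
  have hlim : Tendsto (fun x : ℝ × ℝ => K x.1 * L x.2 * f y1 y2 +
      (K x.1 * x.2⁻¹ + x.1⁻¹ * L x.2 + x.1⁻¹ * x.2⁻¹) * C) (atTop ×ˢ atTop)
      (𝓝 (f y1 y2 / (y1 * y2))) := by
    convert ((hK.mul hL).mul_const (f y1 y2)).add
      (((hK.mul hI2).add (hI1.mul hL) |>.add (hI1.mul hI2)).mul_const C) using 2
    simp only [mul_zero, zero_mul, add_zero]
    field_simp
  filter_upwards [hlim.eventually (gt_mem_nhds hm),
    tendsto_fst.eventually (eventually_ge_atTop y1),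
    tendsto_snd.eventually (eventually_ge_atTop y2)] with x hxm hx1 hx2
  have hx1' : 0 < x.1 := hy1.trans_le hx1
  have hx2' : 0 < x.2 := hy2.trans_le hx2
  calc f x.1 x.2 / (x.1 * x.2) ≤ (⌊x.1 / y1 - 1⌋₊ * ⌊x.2 / y2 - 1⌋₊ * f y1 y2 +
        (⌊x.1 / y1 - 1⌋₊ + ⌊x.2 / y2 - 1⌋₊ + 1) * C) / (x.1 * x.2) := by
        gcongr
        exact hf.le_floor_mul_floor_mul_add hy1 hy2 hC' hx1 hx2
    _ = K x.1 * L x.2 * f y1 y2 +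
          (K x.1 * x.2⁻¹ + x.1⁻¹ * L x.2 + x.1⁻¹ * x.2⁻¹) * C := by
        simp only [K, L]
        field_simp
    _ < m := hxm

theorem exists_forall_div_mul_lt (hf : SubadditiveInEach f)
    (hbdd : ∀ y1 y2, 0 < y1 → 0 < y2 →
      BddAbove (Function.uncurry f '' Icc y1 (2 * y1) ×ˢ Icc y2 (2 * y2)))
    {m : ℝ} (hm : (⨅ x1 ∈ Ioi (0 : ℝ), ⨅ x2 ∈ Ioi (0 : ℝ),
      ((f x1 x2 / (x1 * x2) : ℝ) : EReal)) < m) :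
    ∃ R, 0 < R ∧ ∀ x1 x2, R < x1 → R < x2 → f x1 x2 / (x1 * x2) < m := by
  obtain ⟨y1, hy1, y2, hy2, hym⟩ : ∃ y1 ∈ Ioi (0 : ℝ), ∃ y2 ∈ Ioi (0 : ℝ),
      ((f y1 y2 / (y1 * y2) : ℝ) : EReal) < m := by
    simpa only [iInf_lt_iff, exists_prop] using hm
  have hev := hf.eventually_div_mul_lt hy1 hy2 (hbdd y1 y2 hy1 hy2) (EReal.coe_lt_coe_iff.1 hym)
  rw [prod_atTop_atTop_eq, eventually_atTop_prod_self'] at hev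
  obtain ⟨R, hR⟩ := hev
  exact ⟨max R 1, by positivity, fun x1 x2 hx1 hx2 =>
    hR x1 ((le_max_left R 1).trans_lt hx1).le x2 ((le_max_left R 1).trans_lt hx2).le⟩

theorem exists_tendsto_iInf_div_mul (hf : SubadditiveInEach f)
    (hbdd : ∀ y1 y2, 0 < y1 → 0 < y2 →
      BddAbove (Function.uncurry f '' Icc y1 (2 * y1) ×ˢ Icc y2 (2 * y2))) :
    ∃ g : ℝ → EReal,
      (∀ x1 : ℝ, 0 < x1 →
        Tendsto (fun x2 : ℝ => ((f x1 x2 / (x1 * x2) : ℝ) : EReal)) atTop (𝓝 (g x1))) ∧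
      Tendsto g atTop (𝓝 (⨅ x1 ∈ Ioi (0 : ℝ), ⨅ x2 ∈ Ioi (0 : ℝ),
        ((f x1 x2 / (x1 * x2) : ℝ) : EReal))) := by
  refine ⟨fun x1 => ⨅ x2 ∈ Ioi (0 : ℝ), ((f x1 x2 / (x1 * x2) : ℝ) : EReal),
    fun x1 hx1 => ?_, ?_⟩
  · have hbdd1 : ∀ y, 0 < y → BddAbove ((f x1 · / x1) '' Icc y (2 * y)) := fun y hy => by
      obtain ⟨C, hC⟩ := hbdd x1 y hx1 hy
      refine ⟨C / x1, ?_⟩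
      rintro _ ⟨t, ht, rfl⟩
      exact div_le_div_of_nonneg_right
        (hC (mem_image_of_mem _ (mk_mem_prod (left_mem_Icc.2 (by linarith)) ht))) hx1.le
    simpa only [div_div] using ((hf.2 x1 hx1).div_const hx1.le).tendsto_div_atTop hbdd1
  · refine EReal.tendsto_nhds_of_eventually_ge_of_forall_lt
      ((eventually_gt_atTop 0).mono fun x1 hx1 => iInf₂_le x1 hx1) fun m hm => ?_
    obtain ⟨R, hR0, hR⟩ := hf.exists_forall_div_mul_lt hbdd hm
    filter_upwards [eventually_gt_atTop R] with x1 hx1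
    exact (iInf₂_le (R + 1) (by simp only [mem_Ioi]; linarith)).trans_lt
      (EReal.coe_lt_coe_iff.2 (hR x1 (R + 1) hx1 (lt_add_one R)))

end SubadditiveInEach

/-- **Fekete's lemma for two positive real variables.**  Let `f` be Lebesgue
measurable on `ℝ_{>0}²` and subadditive in each variable however given the other.
Then:
(1) if `I = inf_{x₁,x₂>0} f(x₁,x₂)/(x₁x₂)` is finite, for every `δ > 0` there is
`R > 0` such that `f(x₁,x₂)/(x₁x₂) < I + δ` whenever `x₁, x₂ > R`; and
(2) the two iterated limits `lim_{x₁→∞} lim_{x₂→∞}` and `lim_{x₂→∞} lim_{x₁→∞}`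
of `f(x₁,x₂)/(x₁x₂)` exist in `ℝ ∪ {−∞}` and both equal the infimum. -/
theorem fekete_lemma_two_pos_real_variables
    (f : ℝ → ℝ → ℝ)
    (hmeas : AEMeasurable (fun p : ℝ × ℝ => f p.1 p.2)
      (volume.restrict {p : ℝ × ℝ | 0 < p.1 ∧ 0 < p.2}))
    (h1 : ∀ x1 y1 x2 : ℝ, 0 < x1 → 0 < y1 → 0 < x2 →
      f (x1 + y1) x2 ≤ f x1 x2 + f y1 x2)
    (h2 : ∀ x1 x2 y2 : ℝ, 0 < x1 → 0 < x2 → 0 < y2 →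
      f x1 (x2 + y2) ≤ f x1 x2 + f x1 y2) :
    (∀ I : ℝ,
      (⨅ x1 ∈ Set.Ioi (0 : ℝ), ⨅ x2 ∈ Set.Ioi (0 : ℝ),
        ((f x1 x2 / (x1 * x2) : ℝ) : EReal)) = (I : EReal) →
      ∀ δ : ℝ, 0 < δ → ∃ R : ℝ, 0 < R ∧ ∀ x1 x2 : ℝ, R < x1 → R < x2 →
        f x1 x2 / (x1 * x2) < I + δ) ∧
    (∃ g : ℝ → EReal,
      (∀ x1 : ℝ, 0 < x1 →
        Tendsto (fun x2 : ℝ => ((f x1 x2 / (x1 * x2) : ℝ) : EReal)) atTop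
          (𝓝 (g x1))) ∧
      Tendsto g atTop
        (𝓝 (⨅ x1 ∈ Set.Ioi (0 : ℝ), ⨅ x2 ∈ Set.Ioi (0 : ℝ),
          ((f x1 x2 / (x1 * x2) : ℝ) : EReal)))) ∧
    (∃ g : ℝ → EReal,
      (∀ x2 : ℝ, 0 < x2 →
        Tendsto (fun x1 : ℝ => ((f x1 x2 / (x1 * x2) : ℝ) : EReal)) atTop
          (𝓝 (g x2))) ∧
      Tendsto g atTop
        (𝓝 (⨅ x1 ∈ Set.Ioi (0 : ℝ), ⨅ x2 ∈ Set.Ioi (0 : ℝ),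
          ((f x1 x2 / (x1 * x2) : ℝ) : EReal)))) := by
  have hf : SubadditiveInEach f :=
    ⟨fun x2 hx2 a b ha hb => h1 a b x2 ha hb hx2, fun x1 hx1 a b ha hb => h2 x1 a b hx1 ha hb⟩
  have hbdd := fun y1 y2 (hy1 : 0 < y1) (hy2 : 0 < y2) => hf.bddAbove_image_Icc_prod hmeas hy1 hy2
  refine ⟨fun I hI δ hδ => hf.exists_forall_div_mul_lt hbdd ?_,
    hf.exists_tendsto_iInf_div_mul hbdd, ?_⟩
  · rw [hI]; exact_mod_cast lt_add_of_pos_right I hδ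
  have hbdd_swap : ∀ y1 y2, 0 < y1 → 0 < y2 → BddAbove
      (Function.uncurry (fun a b => f b a) '' Icc y1 (2 * y1) ×ˢ Icc y2 (2 * y2)) := by
    intro y1 y2 hy1 hy2
    have h := hbdd y2 y1 hy2 hy1
    rwa [← image_swap_prod, image_image] at h
  obtain ⟨g, hg, hlim⟩ := hf.swap.exists_tendsto_iInf_div_mul hbdd_swap
  refine ⟨g, fun x2 hx2 => by simpa only [mul_comm] using hg x2 hx2, ?_⟩
  rw [iInf₂_comm] at hlim
  simpa only [mul_comm] using hlim
end
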